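/- Let λ > 0 and let ξ ∈ ℂ with −π/h < Re ξ ≤ π/h be such that the sequence w_j = e^{i j ξ h} satisfies (L_p w)_j = −λ w_j for all j ∈ ℤ, and assume 2 + i(σ_m/ω)(1 − e^{iξh}) ≠ 0 for all m ≥ 0. Define W : ℤ² → ℂ by W_{j,k} = (Π_{m=0}^{k−1} ρ(σ_m, ξ, ω)) e^{i(j+k)ξh} for k ≥ 0 (empty product equal to 1 for k = 0) and W_{j,k} = e^{i(j+k)ξh} for k < 0. Then: (i) W is discrete holomorphic with respect to Z; (ii) W_{j,0} = w_j for all j ∈ ℤ; and (iii) for every k ∈ ℤ the column W_{·,k} satisfies (L_p W_{·,k})_j = −λ W_{j,k} for all j ∈ ℤ. -/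

import Mathlib

/-- The discrete complex stretching grid
`Z_{j,k} = (j+k)h + i(h/ω) Σ_{ℓ=0}^{k-1} σ_ℓ` (the sum being 0 for `k ≤ 0`). -/
noncomputable def Zmap (h ω : ℝ) (σ : ℤ → ℝ) (j k : ℤ) : ℂ :=
  ((j + k : ℤ) : ℂ) * (h : ℂ) +
    Complex.I * ((h : ℂ) / (ω : ℂ)) * ∑ l ∈ Finset.range k.toNat, ((σ l : ℝ) : ℂ)

/-- Discrete holomorphicity with respect to the grid `Zmap h ω σ`: the discrete
Cauchy–Riemann equations hold on every face. -/
def DiscreteHolo (h ω : ℝ) (σ : ℤ → ℝ) (F : ℤ → ℤ → ℂ) : Prop :=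
  ∀ j k : ℤ,
    (F (j + 1) (k + 1) - F j k) * (Zmap h ω σ j (k + 1) - Zmap h ω σ (j + 1) k) =
    (F j (k + 1) - F (j + 1) k) * (Zmap h ω σ (j + 1) (k + 1) - Zmap h ω σ j k)

/-- The attenuation factor
`ρ(σ, ξ, ω) = (2 + i(σ/ω)(1 − e^{−iξh})) / (2 + i(σ/ω)(1 − e^{iξh}))`. -/
noncomputable def rho (σ : ℝ) (ξ : ℂ) (ω h : ℝ) : ℂ :=
  (2 + Complex.I * ((σ : ℂ) / (ω : ℂ)) * (1 - Complex.exp (-(Complex.I * ξ * (h : ℂ))))) /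
  (2 + Complex.I * ((σ : ℂ) / (ω : ℂ)) * (1 - Complex.exp (Complex.I * ξ * (h : ℂ))))

/-- The discrete-holomorphic extension `W` of the mode `w_j = e^{i j ξ h}`:
`W_{j,k} = (Π_{m=0}^{k−1} ρ(σ_m, ξ, ω)) e^{i(j+k)ξh}` for `k ≥ 0`, and
`W_{j,k} = e^{i(j+k)ξh}` for `k < 0`. -/
noncomputable def Wext (h ω : ℝ) (σ : ℤ → ℝ) (ξ : ℂ) (j k : ℤ) : ℂ :=
  if 0 ≤ k then
    (∏ m ∈ Finset.range k.toNat, rho (σ m) ξ ω h) *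
      Complex.exp (Complex.I * ((j + k : ℤ) : ℂ) * ξ * (h : ℂ))
  else
    Complex.exp (Complex.I * ((j + k : ℤ) : ℂ) * ξ * (h : ℂ))

/-! Every column of `W` is a multiple of a translate of the mode `w`, so it solves `L_p v = -λ v`.
Moving one step up multiplies `W` by `ρ(σ_k) e^{iξh}` and one step right by `e^{iξh}`, while the
two diagonals of a face of the grid `Z` differ by `h(2 + iσ_k/ω)` and `h · iσ_k/ω`. The discrete
Cauchy–Riemann equation on the face `(j, k)` thus reduces to one identity in `ρ(σ_k)` and
`q = e^{iξh}`, which after clearing the denominator of `ρ` reads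
`(q² - 1)(2 + u)u = q(q - q⁻¹)u(2 + u)` with `u = iσ_k/ω`. Below the damping layer `σ_k = 0`,
so `ρ(σ_k) = 1` and the same recurrences hold there. -/

open Complex Finset

@[to_additive]
lemma Finset.prod_range_toNat_succ {M : Type*} [CommMonoid M] {f : ℤ → M}
    (hf : ∀ k < 0, f k = 1) (k : ℤ) :
    ∏ l ∈ range (k + 1).toNat, f l = (∏ l ∈ range k.toNat, f l) * f k := by
  rcases lt_or_ge k 0 with hk | hk
  · rw [Int.toNat_of_nonpos (by omega), Int.toNat_of_nonpos hk.le, hf k hk, mul_one]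
  · lift k to ℕ using hk
    rw [show ((k : ℤ) + 1).toNat = k + 1 by omega, Int.toNat_natCast, prod_range_succ]

lemma sum_mul_shift_eq_of_sum_mul_eq {R : Type*} [CommSemiring R] {s : Finset ℤ} {a w : ℤ → R}
    {μ : R} (hw : ∀ j, ∑ r ∈ s, a r * w (j + r) = μ * w j) (C : R) (k j : ℤ) :
    ∑ r ∈ s, a r * (C * w (j + r + k)) = μ * (C * w (j + k)) := by
  simp_rw [add_right_comm j _ k, mul_left_comm (a _) C, ← mul_sum, hw]
  ring

lemma rho_zero (ξ : ℂ) (ω h : ℝ) : rho 0 ξ ω h = 1 := by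
  norm_num [rho]

lemma rho_discrete_cauchy_riemann (s : ℝ) (ξ : ℂ) (ω h : ℝ)
    (hD : 2 + I * ((s : ℂ) / ω) * (1 - cexp (I * ξ * h)) ≠ 0) :
    (rho s ξ ω h * cexp (I * ξ * h) ^ 2 - 1) * (I * ((s : ℂ) / ω)) =
      cexp (I * ξ * h) * (rho s ξ ω h - 1) * (2 + I * ((s : ℂ) / ω)) := by
  have hq : cexp (I * ξ * h) ≠ 0 := exp_ne_zero _
  rw [rho, exp_neg]
  generalize I * ((s : ℂ) / ω) = u at *
  generalize cexp (I * ξ * h) = q at *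
  field_simp
  ring

lemma cexp_I_intCast_add_one_mul (n : ℤ) (ξ : ℂ) (h : ℝ) :
    cexp (I * ((n + 1 : ℤ) : ℂ) * ξ * h) = cexp (I * ξ * h) * cexp (I * (n : ℂ) * ξ * h) := by
  rw [← exp_add]
  congr 1
  push_cast
  ring

section Grid

variable {h ω : ℝ} {σ : ℤ → ℝ}

lemma Zmap_add_one_right_sub_add_one_left (hσ : ∀ k < 0, σ k = 0) (j k : ℤ) :
    Zmap h ω σ j (k + 1) - Zmap h ω σ (j + 1) k = h * (I * ((σ k : ℂ) / ω)) := by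
  simp only [Zmap, sum_range_toNat_succ (f := fun l => ((σ l : ℝ) : ℂ)) (by simpa using hσ)]
  push_cast
  ring

lemma Zmap_add_one_add_one_sub (hσ : ∀ k < 0, σ k = 0) (j k : ℤ) :
    Zmap h ω σ (j + 1) (k + 1) - Zmap h ω σ j k = h * (2 + I * ((σ k : ℂ) / ω)) := by
  simp only [Zmap, sum_range_toNat_succ (f := fun l => ((σ l : ℝ) : ℂ)) (by simpa using hσ)]
  push_cast
  ring

end Grid

section Extension

variable {h ω : ℝ} {σ : ℤ → ℝ} {ξ : ℂ}

lemma Wext_eq (j k : ℤ) :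
    Wext h ω σ ξ j k = (∏ m ∈ range k.toNat, rho (σ m) ξ ω h) *
      cexp (I * ((j + k : ℤ) : ℂ) * ξ * h) := by
  unfold Wext
  split_ifs with hk
  · rfl
  · rw [Int.toNat_of_nonpos (by omega), prod_range_zero, one_mul]

lemma Wext_add_one_left (j k : ℤ) :
    Wext h ω σ ξ (j + 1) k = cexp (I * ξ * h) * Wext h ω σ ξ j k := by
  rw [Wext_eq, Wext_eq, add_right_comm, cexp_I_intCast_add_one_mul]
  ring

lemma Wext_add_one_right (hσ : ∀ k < 0, σ k = 0) (j k : ℤ) :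
    Wext h ω σ ξ j (k + 1) = rho (σ k) ξ ω h * cexp (I * ξ * h) * Wext h ω σ ξ j k := by
  have hρ : ∀ k < 0, rho (σ k) ξ ω h = 1 := fun k hk => by rw [hσ k hk, rho_zero]
  rw [Wext_eq, Wext_eq, prod_range_toNat_succ hρ, ← add_assoc, cexp_I_intCast_add_one_mul]
  ring

end Extension

theorem stmt5_general (p : ℕ) (h : ℝ)
    (a : ℤ → ℝ)
    (ω : ℝ)
    (σ : ℤ → ℝ) (hσneg : ∀ j : ℤ, j < 0 → σ j = 0)
    (lam : ℝ) (ξ : ℂ)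
    (hmode : ∀ j : ℤ, (∑ r ∈ Finset.Icc (-(p : ℤ)) (p : ℤ),
        (a r : ℂ) * Complex.exp (Complex.I * ((j + r : ℤ) : ℂ) * ξ * (h : ℂ))) =
        -(lam : ℂ) * Complex.exp (Complex.I * (j : ℂ) * ξ * (h : ℂ)))
    (hden : ∀ m : ℤ, 0 ≤ m →
        2 + Complex.I * ((σ m : ℂ) / (ω : ℂ)) * (1 - Complex.exp (Complex.I * ξ * (h : ℂ))) ≠ 0) :
    DiscreteHolo h ω σ (Wext h ω σ ξ) ∧
    (∀ j : ℤ, Wext h ω σ ξ j 0 = Complex.exp (Complex.I * (j : ℂ) * ξ * (h : ℂ))) ∧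
    (∀ k j : ℤ, (∑ r ∈ Finset.Icc (-(p : ℤ)) (p : ℤ), (a r : ℂ) * Wext h ω σ ξ (j + r) k) =
        -(lam : ℂ) * Wext h ω σ ξ j k) := by
  refine ⟨fun j k => ?_, fun j => by simp [Wext_eq], fun k j => ?_⟩
  · have hD : 2 + I * ((σ k : ℂ) / ω) * (1 - cexp (I * ξ * h)) ≠ 0 := by
      rcases lt_or_ge k 0 with hk | hk
      · simp [hσneg k hk]
      · exact hden k hk
    rw [Zmap_add_one_right_sub_add_one_left hσneg, Zmap_add_one_add_one_sub hσneg,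
      Wext_add_one_right hσneg, Wext_add_one_right hσneg, Wext_add_one_left]
    linear_combination h * Wext h ω σ ξ j k * rho_discrete_cauchy_riemann (σ k) ξ ω h hD
  · simp only [Wext_eq]
    exact sum_mul_shift_eq_of_sum_mul_eq (w := fun n : ℤ => cexp (I * (n : ℂ) * ξ * h)) hmode _ k j

/-- existence of the discrete holomorphic extension of a mode
`w_j = e^{i j ξ h}` solving `L_p w = -λ w`. -/
theorem stmt5 (p : ℕ) (hp : 1 ≤ p) (h : ℝ) (hh : 0 < h)
    (a : ℤ → ℝ) (hsym : ∀ r : ℤ, a (-r) = a r)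
    (ω : ℝ) (hω : ω ≠ 0)
    (σ : ℤ → ℝ) (hσ : ∀ j : ℤ, 0 ≤ σ j) (hσneg : ∀ j : ℤ, j < 0 → σ j = 0)
    (lam : ℝ) (hlam : 0 < lam) (ξ : ℂ)
    (hξ1 : -(Real.pi / h) < ξ.re) (hξ2 : ξ.re ≤ Real.pi / h)
    (hmode : ∀ j : ℤ, (∑ r ∈ Finset.Icc (-(p : ℤ)) (p : ℤ),
        (a r : ℂ) * Complex.exp (Complex.I * ((j + r : ℤ) : ℂ) * ξ * (h : ℂ))) =
        -(lam : ℂ) * Complex.exp (Complex.I * (j : ℂ) * ξ * (h : ℂ)))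
    (hden : ∀ m : ℤ, 0 ≤ m →
        2 + Complex.I * ((σ m : ℂ) / (ω : ℂ)) * (1 - Complex.exp (Complex.I * ξ * (h : ℂ))) ≠ 0) :
    DiscreteHolo h ω σ (Wext h ω σ ξ) ∧
    (∀ j : ℤ, Wext h ω σ ξ j 0 = Complex.exp (Complex.I * (j : ℂ) * ξ * (h : ℂ))) ∧
    (∀ k j : ℤ, (∑ r ∈ Finset.Icc (-(p : ℤ)) (p : ℤ), (a r : ℂ) * Wext h ω σ ξ (j + r) k) =
        -(lam : ℂ) * Wext h ω σ ξ j k) :=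
  stmt5_general p h a ω σ hσneg lam ξ hmode hden
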